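/- arXiv:1501.02518 — 4 statements merged into one kernel-verified Lean document; each statement's English description precedes it below -/
import Mathlib

section
/- Let X be a real-valued integrable random variable on a probability space (Ω, F, P) and let α ∈ (0,1). Then AVaR_α(X) = min_{s ∈ ℝ} { s + (1/(1-α)) · E[(X - s)^+] }, i.e. the infimum over s ∈ ℝ of s + (1/(1-α))·E[(X-s)^+] is attained and equals the Average-Value-at-Risk of X at level α. -/
open MeasureTheory

/-- Value-at-Risk of `X` at level `t`: `VaR_t(X) = inf { x : P(X ≤ x) ≥ t }`. -/
noncomputable def VaR {Ω : Type*} [MeasurableSpace Ω] (P : Measure Ω) (t : ℝ)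
    (X : Ω → ℝ) : ℝ :=
  sInf {x : ℝ | t ≤ (P {ω | X ω ≤ x}).toReal}

/-- Average-Value-at-Risk of `X` at level `α`:
`AVaR_α(X) = (1/(1-α)) ∫_α^1 VaR_t(X) dt`. -/
noncomputable def AVaR {Ω : Type*} [MeasurableSpace Ω] (P : Measure Ω) (α : ℝ)
    (X : Ω → ℝ) : ℝ :=
  (1 - α)⁻¹ * ∫ t in α..1, VaR P t X

/-! The quantile function `q` of the law `μ` of `X` pushes Lebesgue measure on `(0,1)` forward to
`μ`, so `E[(X - s)⁺] = ∫₀¹ (q u - s)⁺ du`, and `VaR_t(X) = q t`. For every `s`,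
`∫_α^1 q ≤ s (1 - α) + ∫_α^1 (q - s)⁺ ≤ s (1 - α) + ∫₀¹ (q - s)⁺`,
and since `q` is monotone both inequalities are equalities at `s = q α`. -/

open ProbabilityTheory Set Filter

lemma volume_Ioo_inter_Iic {c : ℝ} (hc : c ∈ Icc (0 : ℝ) 1) :
    volume (Ioo 0 1 ∩ Iic c) = ENNReal.ofReal c := by
  rcases hc.2.lt_or_eq with hc1 | rfl
  · rw [show Ioo 0 1 ∩ Iic c = Ioc 0 c by ext; simp; grind, Real.volume_Ioc, sub_zero]
  · rw [inter_eq_left.2 fun _ hu => hu.2.le, Real.volume_Ioo, sub_zero]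

namespace ProbabilityTheory

/-- Outside `(0,1)` the defining set is empty or unbounded below, and `sInf` gives junk. -/
noncomputable def quantile (μ : Measure ℝ) (t : ℝ) : ℝ := sInf {x : ℝ | t ≤ cdf μ x}

variable (μ : Measure ℝ)

lemma nonempty_setOf_le_cdf {t : ℝ} (ht : t < 1) : {x : ℝ | t ≤ cdf μ x}.Nonempty :=
  ((tendsto_cdf_atTop μ).eventually_const_le ht).exists

lemma bddBelow_setOf_le_cdf {t : ℝ} (ht : 0 < t) : BddBelow {x : ℝ | t ≤ cdf μ x} := by
  obtain ⟨x₀, hx₀⟩ := ((tendsto_cdf_atBot μ).eventually_lt_const ht).exists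
  exact ⟨x₀, fun x hx => le_of_not_ge fun hlt => (hx.trans (monotone_cdf μ hlt)).not_gt hx₀⟩

lemma le_cdf_quantile {t : ℝ} (ht : t ∈ Ioo 0 1) : t ≤ cdf μ (quantile μ t) := by
  refine ge_of_tendsto (((cdf μ).right_continuous _).mono Ioi_subset_Ici_self) ?_
  filter_upwards [eventually_mem_nhdsWithin] with x hx
  obtain ⟨y, hy, hyx⟩ := exists_lt_of_csInf_lt (nonempty_setOf_le_cdf μ ht.2) hx
  exact hy.trans (monotone_cdf μ hyx.le)

lemma quantile_le_iff {t : ℝ} (ht : t ∈ Ioo 0 1) {y : ℝ} : quantile μ t ≤ y ↔ t ≤ cdf μ y :=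
  ⟨fun h => (le_cdf_quantile μ ht).trans (monotone_cdf μ h),
    fun h => csInf_le (bddBelow_setOf_le_cdf μ ht.1) h⟩

lemma monotoneOn_quantile : MonotoneOn (quantile μ) (Ioo 0 1) := fun _ ha _ hb hab =>
  csInf_le_csInf (bddBelow_setOf_le_cdf μ ha.1) (nonempty_setOf_le_cdf μ hb.2)
    fun _ hx => hab.trans hx

lemma aemeasurable_quantile : AEMeasurable (quantile μ) (volume.restrict (Ioo 0 1)) :=
  aemeasurable_restrict_of_monotoneOn measurableSet_Ioo (monotoneOn_quantile μ)

variable [IsProbabilityMeasure μ]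

theorem map_quantile_volume : (volume.restrict (Ioo 0 1)).map (quantile μ) = μ := by
  refine (Measure.ext_of_Iic μ _ fun y => ?_).symm
  have hpre : quantile μ ⁻¹' Iic y ∩ Ioo 0 1 = Ioo 0 1 ∩ Iic (cdf μ y) := by
    ext u
    simp only [mem_inter_iff, mem_preimage, mem_Iic]
    exact ⟨fun h => ⟨h.2, (quantile_le_iff μ h.2).1 h.1⟩,
      fun h => ⟨(quantile_le_iff μ h.1).2 h.2, h.1⟩⟩
  rw [Measure.map_apply_of_aemeasurable (aemeasurable_quantile μ) measurableSet_Iic,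
    Measure.restrict_apply' measurableSet_Ioo, hpre,
    volume_Ioo_inter_Iic ⟨cdf_nonneg μ y, cdf_le_one μ y⟩, ofReal_cdf]

lemma setIntegral_comp_quantile {f : ℝ → ℝ} (hf : AEStronglyMeasurable f μ) :
    ∫ u in Ioo 0 1, f (quantile μ u) = ∫ x, f x ∂μ := by
  rw [← integral_map (aemeasurable_quantile μ) ((map_quantile_volume μ).symm ▸ hf),
    map_quantile_volume]

lemma integrableOn_comp_quantile {f : ℝ → ℝ} (hf : Integrable f μ) :
    IntegrableOn (fun u => f (quantile μ u)) (Ioo 0 1) := by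
  rw [← map_quantile_volume μ] at hf
  exact (integrable_map_measure hf.aestronglyMeasurable (aemeasurable_quantile μ)).1 hf

end ProbabilityTheory

section MonotoneOn

variable {q : ℝ → ℝ} {α : ℝ} (hq : MonotoneOn q (Ioo 0 1)) (hα : α ∈ Ioo (0 : ℝ) 1)
include hα

lemma setIntegral_Ioo_eq_add (hqα : IntegrableOn q (Ioo α 1)) (s : ℝ) :
    ∫ u in Ioo α 1, q u = s * (1 - α) + ∫ u in Ioo α 1, (q u - s) := by
  rw [integral_sub hqα (integrableOn_const measure_Ioo_lt_top.ne), setIntegral_const,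
    measureReal_def, Real.volume_Ioo, ENNReal.toReal_ofReal (by linarith [hα.2]), smul_eq_mul]
  ring

include hq

lemma integrableOn_Ioo_of_monotoneOn
    (hint : IntegrableOn (fun u => max (q u - q α) 0) (Ioo 0 1)) :
    IntegrableOn q (Ioo α 1) := by
  have hconst : IntegrableOn (fun _ => q α) (Ioo α 1) := integrableOn_const measure_Ioo_lt_top.ne
  refine ((hint.mono_set (Ioo_subset_Ioo_left hα.1.le)).add hconst).congr_fun
    (fun u hu => ?_) measurableSet_Ioo
  have : q α ≤ q u := hq hα ⟨hα.1.trans hu.1, hu.2⟩ hu.1.le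
  simp only [Pi.add_apply, max_eq_left (sub_nonneg.2 this)]
  ring

lemma setIntegral_Ioo_le (hint : ∀ s, IntegrableOn (fun u => max (q u - s) 0) (Ioo 0 1))
    (s : ℝ) : ∫ u in Ioo α 1, q u ≤ s * (1 - α) + ∫ u in Ioo 0 1, max (q u - s) 0 := by
  have hqα := integrableOn_Ioo_of_monotoneOn hq hα (hint (q α))
  rw [setIntegral_Ioo_eq_add hα hqα s, add_le_add_iff_left]
  calc ∫ u in Ioo α 1, (q u - s)
      ≤ ∫ u in Ioo α 1, max (q u - s) 0 :=
        setIntegral_mono (hqα.sub (integrableOn_const measure_Ioo_lt_top.ne))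
          ((hint s).mono_set (Ioo_subset_Ioo_left hα.1.le)) fun _ => le_max_left _ _
    _ ≤ ∫ u in Ioo 0 1, max (q u - s) 0 :=
        setIntegral_mono_set (hint s) (Eventually.of_forall fun _ => le_max_right _ _)
          (Ioo_subset_Ioo_left hα.1.le).eventuallyLE

lemma setIntegral_Ioo_eq_at_quantile (hqα : IntegrableOn q (Ioo α 1)) :
    ∫ u in Ioo α 1, q u = q α * (1 - α) + ∫ u in Ioo 0 1, max (q u - q α) 0 := by
  rw [setIntegral_Ioo_eq_add hα hqα (q α), setIntegral_eq_of_subset_of_forall_sdiff_eq_zero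
    measurableSet_Ioo (Ioo_subset_Ioo_left hα.1.le) fun u hu => ?_]
  · refine congrArg _ (setIntegral_congr_fun measurableSet_Ioo fun u hu => ?_)
    exact (max_eq_left (sub_nonneg.2 (hq hα ⟨hα.1.trans hu.1, hu.2⟩ hu.1.le))).symm
  · have hua : u ≤ α := le_of_not_gt fun h => hu.2 ⟨h, hu.1.2⟩
    exact max_eq_right (sub_nonpos.2 (hq hu.1 hα hua))

theorem isLeast_add_integral_posPart_of_monotoneOn
    (hint : ∀ s, IntegrableOn (fun u => max (q u - s) 0) (Ioo 0 1)) :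
    IsLeast (range fun s => s + (1 - α)⁻¹ * ∫ u in Ioo 0 1, max (q u - s) 0)
      ((1 - α)⁻¹ * ∫ u in Ioo α 1, q u) := by
  have h1α : (1 - α)⁻¹ * (1 - α) = 1 := inv_mul_cancel₀ (by linarith [hα.2])
  refine ⟨⟨q α, ?_⟩, ?_⟩
  · rw [setIntegral_Ioo_eq_at_quantile hq hα (integrableOn_Ioo_of_monotoneOn hq hα (hint _)),
      mul_add, ← mul_assoc, mul_comm _ (q α), mul_assoc, h1α, mul_one]
  · rintro _ ⟨s, rfl⟩
    have := mul_le_mul_of_nonneg_left (setIntegral_Ioo_le hq hα hint s)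
      (inv_nonneg.2 (by linarith [hα.2] : (0 : ℝ) ≤ 1 - α))
    rwa [mul_add, ← mul_assoc, mul_comm _ s, mul_assoc, h1α, mul_one] at this

end MonotoneOn

lemma VaR_eq_quantile_map {Ω : Type*} [MeasurableSpace Ω] {P : Measure Ω}
    [IsProbabilityMeasure P] {X : Ω → ℝ} (hX : AEMeasurable X P) (t : ℝ) :
    VaR P t X = quantile (P.map X) t := by
  have := Measure.isProbabilityMeasure_map (μ := P) hX
  simp only [VaR, quantile, cdf_eq_real, measureReal_def,
    Measure.map_apply_of_aemeasurable hX measurableSet_Iic]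
  rfl

/-- For an integrable random variable `X` and `α ∈ (0,1)`, the Average-Value-at-Risk
equals the minimum over `s ∈ ℝ` of `s + (1/(1-α)) E[(X - s)⁺]`, and this minimum is
attained. -/
theorem avar_eq_min_of_representation
    {Ω : Type*} [MeasurableSpace Ω] (P : Measure Ω) [IsProbabilityMeasure P]
    (X : Ω → ℝ) (hX : Integrable X P) (α : ℝ) (hα : α ∈ Set.Ioo (0 : ℝ) 1) :
    IsLeast (Set.range fun s : ℝ => s + (1 - α)⁻¹ * ∫ ω, max (X ω - s) 0 ∂P)
      (AVaR P α X) := by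
  set μ := P.map X
  have : IsProbabilityMeasure μ := Measure.isProbabilityMeasure_map hX.aemeasurable
  have hposPart (s : ℝ) : Integrable (fun x => max (x - s) 0) μ :=
    (integrable_map_measure (by fun_prop) hX.aemeasurable).2 (hX.sub (integrable_const s)).pos_part
  have hE (s : ℝ) : ∫ ω, max (X ω - s) 0 ∂P = ∫ u in Ioo 0 1, max (quantile μ u - s) 0 :=
    (integral_map (f := fun x => max (x - s) 0) hX.aemeasurable (by fun_prop)).symm.trans
      (setIntegral_comp_quantile μ (f := fun x => max (x - s) 0) (by fun_prop)).symm
  have hAVaR : AVaR P α X = (1 - α)⁻¹ * ∫ u in Ioo α 1, quantile μ u := by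
    simp only [AVaR, intervalIntegral.integral_of_le hα.2.le, integral_Ioc_eq_integral_Ioo,
      VaR_eq_quantile_map hX.aemeasurable]
    rfl
  simp only [hE, hAVaR]
  exact isLeast_add_integral_posPart_of_monotoneOn (monotoneOn_quantile μ) hα fun s =>
    integrableOn_comp_quantile μ (hposPart s)
end

section
/- Let X and Y be real-valued integrable random variables on a probability space (Ω, F, P), α ∈ (0,1), and λ ∈ (0,1). Then AVaR_α(λX + (1-λ)Y) ≤ λ·AVaR_α(X) + (1-λ)·AVaR_α(Y) (convexity of the Average-Value-at-Risk). -/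
/-!
The proof goes through the Rockafellar–Uryasev representation
`AVaR_α(Z) = min_z (z + E[(Z - z)⁺] / (1 - α))`, the minimum being attained at `z = VaR_α(Z)`.
The objective `(Z, z) ↦ z + E[(Z - z)⁺] / (1 - α)` is jointly convex, so evaluating it for
`λX + (1-λ)Y` at `λ VaR_α(X) + (1-λ) VaR_α(Y)` gives the inequality.

The representation holds because `t ↦ VaR_t(Z)` pushes Lebesgue measure on `(0,1)` forward to
the law of `Z`, whence `∫_0^1 (VaR_t(Z) - z)⁺ dt = E[(Z - z)⁺]`; moreover
`VaR_t(Z) - z ≤ (VaR_t(Z) - z)⁺` on `(α,1)`, and for `z = VaR_α(Z)` this is an equality there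
while `(VaR_t(Z) - z)⁺` vanishes on `(0,α]`.
-/

open MeasureTheory

open Set Filter Topology ProbabilityTheory

section Integral

variable {Ω : Type*} [MeasurableSpace Ω] {μ : Measure Ω}

lemma setIntegral_eq_mul_add_setIntegral_sub {f : Ω → ℝ} {s : Set Ω} (hf : IntegrableOn f s μ)
    (hs : μ s ≠ ⊤) (z : ℝ) :
    ∫ ω in s, f ω ∂μ = μ.real s * z + ∫ ω in s, (f ω - z) ∂μ := by
  rw [integral_sub hf (integrableOn_const hs), setIntegral_const, smul_eq_mul]
  ring

variable [IsFiniteMeasure μ]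

noncomputable def rockafellarUryasev (μ : Measure Ω) (α : ℝ) (Z : Ω → ℝ) (z : ℝ) : ℝ :=
  z + (1 - α)⁻¹ * ∫ ω, max (Z ω - z) 0 ∂μ

lemma integral_max_sub_mix_le {X Y : Ω → ℝ} (hX : Integrable X μ) (hY : Integrable Y μ)
    {l : ℝ} (hl : l ∈ Icc 0 1) (x y : ℝ) :
    ∫ ω, max (l * X ω + (1 - l) * Y ω - (l * x + (1 - l) * y)) 0 ∂μ ≤
      l * ∫ ω, max (X ω - x) 0 ∂μ + (1 - l) * ∫ ω, max (Y ω - y) 0 ∂μ := by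
  have hXx : Integrable (fun ω => max (X ω - x) 0) μ := (hX.sub (integrable_const x)).pos_part
  have hYy : Integrable (fun ω => max (Y ω - y) 0) μ := (hY.sub (integrable_const y)).pos_part
  rw [← integral_const_mul, ← integral_const_mul,
    ← integral_add (hXx.const_mul l) (hYy.const_mul _)]
  refine integral_mono ((hX.const_mul l).add (hY.const_mul _) |>.sub (integrable_const _)).pos_part
    ((hXx.const_mul l).add (hYy.const_mul _)) fun ω => ?_
  have hconv := ((convexOn_id convex_univ).sup (convexOn_const (0 : ℝ) convex_univ)).2
    (mem_univ (X ω - x)) (mem_univ (Y ω - y)) hl.1 (sub_nonneg.2 hl.2) (add_sub_cancel l 1)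
  simp only [smul_eq_mul, Pi.sup_apply, id] at hconv
  rwa [show l * X ω + (1 - l) * Y ω - (l * x + (1 - l) * y) =
    l * (X ω - x) + (1 - l) * (Y ω - y) by ring]

lemma rockafellarUryasev_mix_le {X Y : Ω → ℝ} (hX : Integrable X μ) (hY : Integrable Y μ)
    {α : ℝ} (hα : α ≤ 1) {l : ℝ} (hl : l ∈ Icc 0 1) (x y : ℝ) :
    rockafellarUryasev μ α (fun ω => l * X ω + (1 - l) * Y ω) (l * x + (1 - l) * y) ≤
      l * rockafellarUryasev μ α X x + (1 - l) * rockafellarUryasev μ α Y y := by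
  have h := mul_le_mul_of_nonneg_left (integral_max_sub_mix_le hX hY hl x y)
    (inv_nonneg.2 (sub_nonneg.2 hα))
  unfold rockafellarUryasev
  linear_combination h

end Integral

section Quantile

variable {Ω : Type*} [MeasurableSpace Ω] {P : Measure Ω} [IsProbabilityMeasure P] {Z : Ω → ℝ}

lemma VaR_eq_sInf_cdf (hZ : AEMeasurable Z P) (t : ℝ) :
    VaR P t Z = sInf {x | t ≤ cdf (P.map Z) x} := by
  have := Measure.isProbabilityMeasure_map hZ
  simp_rw [VaR, cdf_eq_real, measureReal_def,
    Measure.map_apply_of_aemeasurable hZ measurableSet_Iic]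
  rfl

lemma VaR_le_iff (hZ : AEMeasurable Z P) {t : ℝ} (ht : t ∈ Ioo 0 1) {u : ℝ} :
    VaR P t Z ≤ u ↔ t ≤ cdf (P.map Z) u := by
  have := Measure.isProbabilityMeasure_map hZ
  set F := cdf (P.map Z)
  have hne : {x | t ≤ F x}.Nonempty :=
    ((tendsto_cdf_atTop (P.map Z)).eventually (eventually_ge_nhds ht.2)).exists
  have hbdd : BddBelow {x | t ≤ F x} := by
    obtain ⟨b, hb⟩ := ((tendsto_cdf_atBot (P.map Z)).eventually (eventually_lt_nhds ht.1)).exists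
    exact ⟨b, fun x hx => le_of_not_gt fun hxb => (hx.trans (monotone_cdf _ hxb.le)).not_gt hb⟩
  rw [VaR_eq_sInf_cdf hZ]
  refine ⟨fun h => ?_, fun h => csInf_le hbdd h⟩
  have hv : ∀ᶠ v in 𝓝[>] u, t ≤ F v := by
    filter_upwards [self_mem_nhdsWithin] with v hv
    obtain ⟨x, hx, hxv⟩ := (csInf_lt_iff hbdd hne).mp (h.trans_lt hv)
    exact hx.trans (monotone_cdf _ hxv.le)
  exact ge_of_tendsto ((F.right_continuous u).tendsto.mono_left
    (nhdsWithin_mono u Ioi_subset_Ici_self)) hv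

lemma VaR_monotoneOn (hZ : AEMeasurable Z P) : MonotoneOn (fun t => VaR P t Z) (Ioo 0 1) :=
  fun _ hs _ ht hst => (VaR_le_iff hZ hs).mpr (hst.trans ((VaR_le_iff hZ ht).mp le_rfl))

lemma aemeasurable_VaR (hZ : AEMeasurable Z P) :
    AEMeasurable (fun t => VaR P t Z) (volume.restrict (Ioo 0 1)) :=
  aemeasurable_restrict_of_monotoneOn measurableSet_Ioo (VaR_monotoneOn hZ)

lemma map_VaR_volume_restrict (hZ : AEMeasurable Z P) :
    (volume.restrict (Ioo 0 1)).map (fun t => VaR P t Z) = P.map Z := by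
  have := Measure.isProbabilityMeasure_map hZ
  refine Measure.ext_of_Iic _ _ fun u => ?_
  have hpre : (fun t => VaR P t Z) ⁻¹' Iic u ∩ Ioo 0 1 = Ioo 0 1 ∩ Iic (cdf (P.map Z) u) := by
    ext t
    simp only [mem_inter_iff, mem_preimage, mem_Iic]
    exact ⟨fun h => ⟨h.2, (VaR_le_iff hZ h.2).mp h.1⟩,
      fun h => ⟨(VaR_le_iff hZ h.1).mpr h.2, h.1⟩⟩
  have hae : (Ioo 0 1 ∩ Iic (cdf (P.map Z) u) : Set ℝ) =ᵐ[volume]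
      (Ioc 0 1 ∩ Iic (cdf (P.map Z) u) : Set ℝ) :=
    Ioo_ae_eq_Ioc.inter EventuallyEq.rfl
  rw [Measure.map_apply_of_aemeasurable (aemeasurable_VaR hZ) measurableSet_Iic,
    Measure.restrict_apply' measurableSet_Ioo, hpre, measure_congr hae, Ioc_inter_Iic,
    Real.volume_Ioc, min_eq_right (cdf_le_one _ _), sub_zero, ofReal_cdf]

lemma integral_comp_VaR (hZ : AEMeasurable Z P) {g : ℝ → ℝ} (hg : Continuous g) :
    ∫ t in Ioo 0 1, g (VaR P t Z) = ∫ ω, g (Z ω) ∂P := by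
  rw [← integral_map (aemeasurable_VaR hZ) hg.aestronglyMeasurable, map_VaR_volume_restrict hZ,
    integral_map hZ hg.aestronglyMeasurable]

lemma integrableOn_VaR (hZ : Integrable Z P) : IntegrableOn (fun t => VaR P t Z) (Ioo 0 1) := by
  have hid : Integrable id (P.map Z) :=
    (integrable_map_measure aestronglyMeasurable_id hZ.aemeasurable).mpr hZ
  rw [← map_VaR_volume_restrict hZ.aemeasurable] at hid
  exact (integrable_map_measure aestronglyMeasurable_id (aemeasurable_VaR hZ.aemeasurable)).mp hid

lemma integral_max_VaR_sub (hZ : AEMeasurable Z P) (z : ℝ) :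
    ∫ t in Ioo 0 1, max (VaR P t Z - z) 0 = ∫ ω, max (Z ω - z) 0 ∂P :=
  integral_comp_VaR hZ (g := fun x => max (x - z) 0) (by fun_prop)

end Quantile

section AVaR

variable {Ω : Type*} [MeasurableSpace Ω]

lemma AVaR_eq_setIntegral {P : Measure Ω} {Z : Ω → ℝ} {α : ℝ} (hα : α ≤ 1) :
    AVaR P α Z = (1 - α)⁻¹ * ∫ t in Ioo α 1, VaR P t Z := by
  rw [AVaR, intervalIntegral.integral_of_le hα, integral_Ioc_eq_integral_Ioo]

variable {P : Measure Ω} [IsProbabilityMeasure P] {Z : Ω → ℝ} {α : ℝ}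

lemma setIntegral_VaR_le (hZ : Integrable Z P) (hα0 : 0 ≤ α) (hα1 : α ≤ 1) (z : ℝ) :
    ∫ t in Ioo α 1, VaR P t Z ≤ (1 - α) * z + ∫ ω, max (Z ω - z) 0 ∂P := by
  have hsub : Ioo α 1 ⊆ Ioo 0 1 := Ioo_subset_Ioo_left hα0
  have hq := integrableOn_VaR hZ
  have hqz : IntegrableOn (fun t => VaR P t Z - z) (Ioo 0 1) :=
    hq.sub (integrableOn_const measure_Ioo_lt_top.ne)
  calc ∫ t in Ioo α 1, VaR P t Z = (1 - α) * z + ∫ t in Ioo α 1, (VaR P t Z - z) := by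
        rw [setIntegral_eq_mul_add_setIntegral_sub (hq.mono_set hsub) measure_Ioo_lt_top.ne z,
          Real.volume_real_Ioo_of_le hα1]
    _ ≤ (1 - α) * z + ∫ t in Ioo α 1, max (VaR P t Z - z) 0 := by
        refine add_le_add le_rfl ?_
        exact integral_mono (hqz.mono_set hsub) (hqz.mono_set hsub).pos_part
          fun t => le_max_left _ _
    _ ≤ (1 - α) * z + ∫ t in Ioo 0 1, max (VaR P t Z - z) 0 := by
        refine add_le_add le_rfl ?_
        exact setIntegral_mono_set hqz.pos_part (ae_of_all _ fun t => le_max_right _ _)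
          hsub.eventuallyLE
    _ = _ := by rw [integral_max_VaR_sub hZ.aemeasurable]

lemma setIntegral_VaR_eq (hZ : Integrable Z P) (hα : α ∈ Ioo 0 1) :
    ∫ t in Ioo α 1, VaR P t Z = (1 - α) * VaR P α Z + ∫ ω, max (Z ω - VaR P α Z) 0 ∂P := by
  set z := VaR P α Z
  have hq := integrableOn_VaR hZ
  have hmono := VaR_monotoneOn hZ.aemeasurable
  calc ∫ t in Ioo α 1, VaR P t Z = (1 - α) * z + ∫ t in Ioo α 1, (VaR P t Z - z) := by
        rw [setIntegral_eq_mul_add_setIntegral_sub (hq.mono_set (Ioo_subset_Ioo_left hα.1.le))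
          measure_Ioo_lt_top.ne z, Real.volume_real_Ioo_of_le hα.2.le]
    _ = (1 - α) * z + ∫ t in Ioo α 1, max (VaR P t Z - z) 0 := by
        congr 1
        refine setIntegral_congr_fun measurableSet_Ioo fun t ht => ?_
        exact (max_eq_left (sub_nonneg.2 (hmono hα ⟨hα.1.trans ht.1, ht.2⟩ ht.1.le))).symm
    _ = (1 - α) * z + ∫ t in Ioo 0 1, max (VaR P t Z - z) 0 := by
        congr 1
        refine (setIntegral_eq_of_subset_of_forall_sdiff_eq_zero measurableSet_Ioo
          (Ioo_subset_Ioo_left hα.1.le) fun t ht => ?_).symm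
        have htα : t ≤ α := le_of_not_gt fun h => ht.2 ⟨h, ht.1.2⟩
        exact max_eq_right (sub_nonpos.2 (hmono ht.1 hα htα))
    _ = _ := by rw [integral_max_VaR_sub hZ.aemeasurable]

lemma AVaR_le_rockafellarUryasev (hZ : Integrable Z P) (hα0 : 0 ≤ α) (hα1 : α < 1) (z : ℝ) :
    AVaR P α Z ≤ rockafellarUryasev P α Z z := by
  have h1α : 0 < 1 - α := sub_pos.2 hα1
  rw [AVaR_eq_setIntegral hα1.le, rockafellarUryasev]
  calc (1 - α)⁻¹ * ∫ t in Ioo α 1, VaR P t Z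
      ≤ (1 - α)⁻¹ * ((1 - α) * z + ∫ ω, max (Z ω - z) 0 ∂P) := by
        gcongr
        exact setIntegral_VaR_le hZ hα0 hα1.le z
    _ = _ := by rw [mul_add, inv_mul_cancel_left₀ h1α.ne']

lemma AVaR_eq_rockafellarUryasev_VaR (hZ : Integrable Z P) (hα : α ∈ Ioo 0 1) :
    AVaR P α Z = rockafellarUryasev P α Z (VaR P α Z) := by
  rw [AVaR_eq_setIntegral hα.2.le, setIntegral_VaR_eq hZ hα, rockafellarUryasev, mul_add,
    inv_mul_cancel_left₀ (sub_pos.2 hα.2).ne']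

end AVaR

/-- Convexity of the Average-Value-at-Risk: for `λ ∈ (0,1)`,
`AVaR_α(λX + (1-λ)Y) ≤ λ AVaR_α(X) + (1-λ) AVaR_α(Y)`. -/
theorem avar_convex
    {Ω : Type*} [MeasurableSpace Ω] (P : Measure Ω) [IsProbabilityMeasure P]
    (X Y : Ω → ℝ) (hX : Integrable X P) (hY : Integrable Y P)
    (α : ℝ) (hα : α ∈ Set.Ioo (0 : ℝ) 1)
    (l : ℝ) (hl : l ∈ Set.Ioo (0 : ℝ) 1) :
    AVaR P α (fun ω => l * X ω + (1 - l) * Y ω) ≤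
      l * AVaR P α X + (1 - l) * AVaR P α Y := by
  rw [AVaR_eq_rockafellarUryasev_VaR hX hα, AVaR_eq_rockafellarUryasev_VaR hY hα]
  calc AVaR P α (fun ω => l * X ω + (1 - l) * Y ω)
      ≤ rockafellarUryasev P α (fun ω => l * X ω + (1 - l) * Y ω)
          (l * VaR P α X + (1 - l) * VaR P α Y) :=
        AVaR_le_rockafellarUryasev ((hX.const_mul l).add (hY.const_mul _)) hα.1.le hα.2 _
    _ ≤ _ := rockafellarUryasev_mix_le hX hY hα.2.le (Ioo_subset_Icc_self hl) _ _
end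

section
/- Let A be a topological space, K ⊆ A a nonempty subset, and for each N ∈ ℕ let w_N : A → ℝ be a nonnegative lower semicontinuous function that is inf-compact on K (i.e. for every r ∈ ℝ the set { a ∈ K : w_N(a) ≤ r } is compact). Suppose w_N increases pointwise to a function w as N → ∞, where w is also nonnegative, lower semicontinuous, and inf-compact on K. Then lim_{N → ∞} inf_{a ∈ K} w_N(a) = inf_{a ∈ K} w(a), and all these infima are attained whenever they are finite. -/
/-!
A lower semicontinuous function attains its minimum over `K` on the compact sublevel set
`{a ∈ K | u a ≤ u b}` of any `b ∈ K`. The minima `m N` of `w N` increase to some `L ≤ inf_K w`.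
All minimizers of the `w N` lie in the compact set `{a ∈ K | w 0 a ≤ L}`; at a cluster point `x`
of them, closedness of the sublevel sets gives `w M x ≤ L` for every `M`, so `w x ≤ L` in the
limit and `L = inf_K w`.
-/

open Filter Topology

section

variable {α β : Type*} [TopologicalSpace α]

def InfCompactOn [LE β] (f : α → β) (K : Set α) : Prop :=
  ∀ r : β, IsCompact {a ∈ K | f a ≤ r}

theorem LowerSemicontinuous.exists_isMinOn_of_infCompactOn [LinearOrder β] {f : α → β}
    {K : Set α} (hf : LowerSemicontinuous f) (hfK : InfCompactOn f K) (hK : K.Nonempty) :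
    ∃ a ∈ K, IsMinOn f K a := by
  obtain ⟨b, hb⟩ := hK
  obtain ⟨a, ⟨haK, hab⟩, ha⟩ :=
    (hf.lowerSemicontinuousOn _).exists_isMinOn ⟨b, show b ∈ {a ∈ K | f a ≤ f b} from ⟨hb, le_rfl⟩⟩
      (hfK (f b))
  refine ⟨a, haK, fun x hx => ?_⟩
  rcases le_total (f x) (f b) with hxb | hbx
  · exact ha ⟨hx, hxb⟩
  · exact hab.trans hbx

theorem exists_forall_le_of_monotone_of_lowerSemicontinuous [LinearOrder β] {w : ℕ → α → β}
    {K : Set α} {L : β} (hw_lsc : ∀ N, LowerSemicontinuous (w N))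
    (hw0 : IsCompact {a ∈ K | w 0 a ≤ L}) (hw_mono : ∀ a, Monotone fun N => w N a)
    (hL : ∀ N, ∃ a ∈ K, w N a ≤ L) :
    ∃ x ∈ K, ∀ N, w N x ≤ L := by
  choose a haK haL using hL
  have ha_sub : ∀ N, a N ∈ {a ∈ K | w 0 a ≤ L} := fun N =>
    ⟨haK N, (hw_mono (a N) (Nat.zero_le N)).trans (haL N)⟩
  obtain ⟨x, ⟨hxK, -⟩, hx⟩ :=
    hw0.exists_mapClusterPt (f := atTop) (tendsto_principal.2 (Eventually.of_forall ha_sub))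
  refine ⟨x, hxK, fun M => (hw_lsc M).isClosed_preimage L |>.mem_of_mapClusterPt hx ?_⟩
  filter_upwards [eventually_ge_atTop M] with N hMN
  exact (hw_mono (a N) hMN).trans (haL N)

theorem tendsto_iInf_of_monotone_of_lowerSemicontinuous [ConditionallyCompleteLinearOrder β]
    [TopologicalSpace β] [OrderTopology β] {w : ℕ → α → β} {wlim : α → β} {K : Set α}
    (hK : K.Nonempty)
    (hw_lsc : ∀ N, LowerSemicontinuous (w N)) (hw_infCompact : ∀ N, InfCompactOn (w N) K)
    (hw_mono : ∀ a, Monotone fun N => w N a)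
    (hw_tendsto : ∀ a, Tendsto (fun N => w N a) atTop (𝓝 (wlim a))) :
    Tendsto (fun N => ⨅ a : K, w N a) atTop (𝓝 (⨅ a : K, wlim a)) := by
  have : Nonempty K := hK.to_subtype
  choose a haK ha using fun N => (hw_lsc N).exists_isMinOn_of_infCompactOn (hw_infCompact N) hK
  have hm : ∀ N, ⨅ b : K, w N b = w N (a N) := fun N => (ha N).iInf_eq (haK N)
  have hw_le : ∀ N b, w N b ≤ wlim b := fun N b => (hw_mono b).ge_of_tendsto (hw_tendsto b) N
  have hwlim_bdd : BddBelow (Set.range fun b : K => wlim b) :=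
    ⟨w 0 (a 0), by rintro _ ⟨b, rfl⟩; exact (ha 0 b.2).trans (hw_le 0 b)⟩
  have hm_mono : Monotone fun N => ⨅ b : K, w N b := fun M N hMN => by
    simp only [hm]
    exact (ha M (haK N)).trans (hw_mono (a N) hMN)
  have hm_le : ∀ N, ⨅ b : K, w N b ≤ ⨅ b : K, wlim b := fun N =>
    le_ciInf fun b => (hm N).trans_le ((ha N b.2).trans (hw_le N b))
  have hm_bdd : BddAbove (Set.range fun N => ⨅ b : K, w N b) := ⟨_, Set.forall_mem_range.2 hm_le⟩
  set L := ⨆ N, ⨅ b : K, w N b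
  obtain ⟨x, hxK, hxL⟩ := exists_forall_le_of_monotone_of_lowerSemicontinuous hw_lsc
    (hw_infCompact 0 L) hw_mono fun N => ⟨a N, haK N, (hm N).symm.trans_le (le_ciSup hm_bdd N)⟩
  have hL : L = ⨅ b : K, wlim b := le_antisymm (ciSup_le hm_le) <|
    calc ⨅ b : K, wlim b ≤ wlim x := ciInf_le hwlim_bdd ⟨x, hxK⟩
      _ ≤ L := le_of_tendsto' (hw_tendsto x) hxL
  exact hL ▸ tendsto_atTop_ciSup hm_mono hm_bdd

end

theorem tendsto_inf_of_monotone_lsc_infCompact_general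
    {A : Type*} [TopologicalSpace A] (K : Set A) (hK : K.Nonempty)
    (w : ℕ → A → ℝ) (wlim : A → ℝ)
    (hw_lsc : ∀ N (r : ℝ), IsClosed {a : A | w N a ≤ r})
    (hw_infcompact : ∀ N (r : ℝ), IsCompact {a ∈ K | w N a ≤ r})
    (hw_mono : ∀ a, Monotone fun N => w N a)
    (hw_tendsto : ∀ a, Tendsto (fun N => w N a) atTop (nhds (wlim a)))
    (hwlim_lsc : ∀ r : ℝ, IsClosed {a : A | wlim a ≤ r})
    (hwlim_infcompact : ∀ r : ℝ, IsCompact {a ∈ K | wlim a ≤ r}) :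
    Tendsto (fun N => ⨅ a : K, w N a) atTop (nhds (⨅ a : K, wlim a)) ∧
    (∀ N, ∃ a ∈ K, w N a = ⨅ b : K, w N b) ∧
    (∃ a ∈ K, wlim a = ⨅ b : K, wlim b) := by
  have hw_lsc' : ∀ N, LowerSemicontinuous (w N) := fun N =>
    lowerSemicontinuous_iff_isClosed_preimage.2 (hw_lsc N)
  have attains_iInf : ∀ u : A → ℝ, LowerSemicontinuous u → InfCompactOn u K →
      ∃ a ∈ K, u a = ⨅ b : K, u b := fun u hu huK =>
    let ⟨a, haK, ha⟩ := hu.exists_isMinOn_of_infCompactOn huK hK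
    ⟨a, haK, (ha.iInf_eq haK).symm⟩
  exact ⟨tendsto_iInf_of_monotone_of_lowerSemicontinuous hK hw_lsc' hw_infcompact hw_mono
      hw_tendsto,
    fun N => attains_iInf (w N) (hw_lsc' N) (hw_infcompact N),
    attains_iInf wlim (lowerSemicontinuous_iff_isClosed_preimage.2 hwlim_lsc) hwlim_infcompact⟩

/-- Let `K ⊆ A` be nonempty and let `w_N : A → ℝ` be nonnegative, lower
semicontinuous and inf-compact on `K` functions increasing pointwise to a
function `w` that is also nonnegative, lower semicontinuous and inf-compact
on `K`. Then `inf_{a ∈ K} w_N(a) → inf_{a ∈ K} w(a)` as `N → ∞`, and all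
these infima are attained. -/
theorem tendsto_inf_of_monotone_lsc_infCompact
    {A : Type*} [TopologicalSpace A] (K : Set A) (hK : K.Nonempty)
    (w : ℕ → A → ℝ) (wlim : A → ℝ)
    (hw_nonneg : ∀ N a, 0 ≤ w N a)
    (hw_lsc : ∀ N (r : ℝ), IsClosed {a : A | w N a ≤ r})
    (hw_infcompact : ∀ N (r : ℝ), IsCompact {a ∈ K | w N a ≤ r})
    (hw_mono : ∀ a, Monotone fun N => w N a)
    (hw_tendsto : ∀ a, Tendsto (fun N => w N a) atTop (nhds (wlim a)))
    (hwlim_nonneg : ∀ a, 0 ≤ wlim a)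
    (hwlim_lsc : ∀ r : ℝ, IsClosed {a : A | wlim a ≤ r})
    (hwlim_infcompact : ∀ r : ℝ, IsCompact {a ∈ K | wlim a ≤ r}) :
    Tendsto (fun N => ⨅ a : K, w N a) atTop (nhds (⨅ a : K, wlim a)) ∧
    (∀ N, ∃ a ∈ K, w N a = ⨅ b : K, w N b) ∧
    (∃ a ∈ K, wlim a = ⨅ b : K, wlim b) :=
  tendsto_inf_of_monotone_lsc_infCompact_general K hK w wlim hw_lsc hw_infcompact hw_mono hw_tendsto
    hwlim_lsc hwlim_infcompact
end

section
/- Let X and A be Polish spaces, let K be a Borel subset of X × A such that for every x ∈ X the section A(x) := { a ∈ A : (x,a) ∈ K } is nonempty, and let u : K → ℝ be a nonnegative lower semicontinuous function that is inf-compact on K, i.e. for every x ∈ X and every r ∈ ℝ the set { a ∈ A(x) : u(x,a) ≤ r } is compact. Then there exists a Borel measurable function f : X → A with f(x) ∈ A(x) for all x ∈ X such that u(x, f(x)) = inf_{a ∈ A(x)} u(x,a) for all x ∈ X, and the function u*(x) := inf_{a ∈ A(x)} u(x,a) is Borel measurable. -/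
/-!
The minimal value `u* x` is attained because the nonempty sublevel sets of `u (x, ·)` are
compact, and `{u* ≤ r}` is the projection of the Borel set `{p ∈ K | u p ≤ r}`, whose sections
are compact. Such projections are Borel (Novikov): after embedding `A` in the Hilbert cube the
sections are closed in a compact space, and the complement of the projection is described by
finite covers by basic open sets together with Borel sets obtained from a separation theorem for
analytic sets, proved by a Lusin scheme on `ℕ → ℕ`. A measurable minimiser is then found by
minimising the Hilbert cube coordinates one after the other over the set of minimisers of `u`.
-/

open Filter Topology Set Function MeasureTheory PiNat

section RectSeparable

variable {X Y : Type*} [MeasurableSpace X] [MeasurableSpace Y]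

/-- Novikov-type separation: there are Borel sets `D ⊇ B` and `S n ⊇ A n` such that `D` still
misses `⋂ n, (S n ×ˢ univ ∪ univ ×ˢ F n)`. -/
def MeasurablyRectSeparable (B : Set (X × Y)) (A : ℕ → Set X) (F : ℕ → Set Y) : Prop :=
  ∃ (D : Set (X × Y)) (S : ℕ → Set X), MeasurableSet D ∧ (∀ n, MeasurableSet (S n)) ∧
    B ⊆ D ∧ (∀ n, A n ⊆ S n) ∧ ∀ p ∈ D, ∃ n, p.1 ∉ S n ∧ p.2 ∉ F n

namespace MeasurablyRectSeparable

variable {B : Set (X × Y)} {A : ℕ → Set X} {F : ℕ → Set Y}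

lemma empty (A : ℕ → Set X) (F : ℕ → Set Y) : MeasurablyRectSeparable ∅ A F :=
  ⟨∅, fun _ => univ, .empty, fun _ => .univ, subset_rfl, fun _ => subset_univ _,
    fun _ hp => hp.elim⟩

lemma of_subset_iUnion {ι : Type*} [Countable ι] {B' : ι → Set (X × Y)} (hB : B ⊆ ⋃ i, B' i)
    (h : ∀ i, MeasurablyRectSeparable (B' i) A F) : MeasurablyRectSeparable B A F := by
  choose D S hD hS hBD hAS hDS using h
  refine ⟨⋃ i, D i, fun n => ⋂ i, S i n, .iUnion hD, fun n => .iInter fun i => hS i n,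
    hB.trans (iUnion_mono hBD), fun n => subset_iInter fun i => hAS i n, fun p hp => ?_⟩
  obtain ⟨i, hi⟩ := mem_iUnion.1 hp
  obtain ⟨n, hpS, hpF⟩ := hDS i p hi
  exact ⟨n, fun h => hpS (mem_iInter.1 h i), hpF⟩

lemma of_subset_union {B₁ B₂ : Set (X × Y)} (hB : B ⊆ B₁ ∪ B₂)
    (h₁ : MeasurablyRectSeparable B₁ A F) (h₂ : MeasurablyRectSeparable B₂ A F) :
    MeasurablyRectSeparable B A F :=
  of_subset_iUnion (hB.trans (union_eq_iUnion).subset) fun b => by cases b <;> assumption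

lemma of_subset_iUnion_update (j : ℕ) {Q : ℕ → Set X} (hA : A j ⊆ ⋃ m, Q m)
    (h : ∀ m, MeasurablyRectSeparable B (update A j (Q m)) F) : MeasurablyRectSeparable B A F := by
  choose D S hD hS hBD hAS hDS using h
  refine ⟨⋂ m, D m, fun n => if n = j then ⋃ m, S m n else ⋂ m, S m n, .iInter hD,
    fun n => ?_, subset_iInter hBD, fun n => ?_, fun p hp => ?_⟩
  · dsimp only
    split_ifs
    exacts [.iUnion fun m => hS m n, .iInter fun m => hS m n]
  · dsimp only
    split_ifs with hn
    · subst hn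
      exact hA.trans (iUnion_mono fun m => by simpa using hAS m n)
    · exact subset_iInter fun m => by simpa [hn] using hAS m n
  choose n hpS hpF using fun m => hDS m p (mem_iInter.1 hp m)
  by_cases hj : ∃ m, n m ≠ j
  · obtain ⟨m, hm⟩ := hj
    exact ⟨n m, by simpa [hm] using ⟨m, hpS m⟩, hpF m⟩
  · push Not at hj
    refine ⟨j, ?_, hj 0 ▸ hpF 0⟩
    simpa using fun m => hj m ▸ hpS m

lemma of_forall_ite_lt (Q : ℕ → ℕ → Set X) (J : ℕ) (hA : ∀ i, A i ⊆ ⋃ m, Q i m)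
    (h : ∀ m : ℕ → ℕ, MeasurablyRectSeparable B (fun i => if i < J then Q i (m i) else A i) F) :
    MeasurablyRectSeparable B A F := by
  induction J generalizing A with
  | zero => simpa using h 0
  | succ J ih =>
    refine of_subset_iUnion_update J (hA J) fun m' => ih (fun i => ?_) fun m => ?_
    · rcases eq_or_ne i J with rfl | hi
      · simpa using subset_iUnion _ m'
      · simpa [hi] using hA i
    · convert h (update m J m') using 2 with i
      rcases lt_trichotomy i J with hi | rfl | hi
      · simp [hi, hi.trans (Nat.lt_succ_self J), hi.ne]
      · simp
      · simp [hi.not_gt, (Nat.succ_le_of_lt hi).not_gt, hi.ne']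

lemma of_comp (e : ℕ → ℕ) (h : MeasurablyRectSeparable B (A ∘ e) (F ∘ e)) :
    MeasurablyRectSeparable B A F := by
  obtain ⟨D, S, hD, hS, hBD, hAS, hDS⟩ := h
  refine ⟨D, fun n => ⋂ (k) (_ : e k = n), S k, hD, fun n => .iInter fun k => .iInter fun _ => hS k,
    hBD, fun n => subset_iInter₂ fun k hk => hk ▸ hAS k, fun p hp => ?_⟩
  obtain ⟨k, hpS, hpF⟩ := hDS p hp
  exact ⟨e k, fun h => hpS (mem_iInter₂.1 h k rfl), hpF⟩

lemma of_subset_prod (n : ℕ) {U V : Set X} (hU : MeasurableSet U) (hV : MeasurableSet V)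
    (hF : MeasurableSet (F n)) (hUV : Disjoint U V) (hB : B ⊆ U ×ˢ (F n)ᶜ) (hA : A n ⊆ V) :
    MeasurablyRectSeparable B A F := by
  refine ⟨U ×ˢ (F n)ᶜ, fun i => if i = n then V else univ, hU.prod hF.compl,
    fun i => ?_, hB, fun i => ?_, fun p hp => ⟨n, by simpa using disjoint_left.1 hUV hp.1, hp.2⟩⟩
  · dsimp only
    split_ifs
    exacts [hV, .univ]
  · dsimp only
    split_ifs with hi
    exacts [hi ▸ hA, subset_univ _]

lemma snd_preimage_compl (hF : ∀ n, MeasurableSet (F n)) :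
    MeasurablyRectSeparable (Prod.snd ⁻¹' (⋂ (n) (_ : A n = ∅), F n)ᶜ) A F := by
  refine ⟨_, fun n => {_x | (A n).Nonempty},
    (MeasurableSet.iInter fun n => .iInter fun _ => hF n).compl.preimage measurable_snd,
    fun n => .const _, subset_rfl, fun n x hx => ⟨x, hx⟩, fun p hp => ?_⟩
  simp only [mem_preimage, mem_compl_iff, mem_iInter, not_forall] at hp
  obtain ⟨n, hn, hpF⟩ := hp
  exact ⟨n, by simp [hn], hpF⟩

end MeasurablyRectSeparable

end RectSeparable

theorem PiNat.exists_forall_of_diag_refine {E : Type*} (P : ℕ → (ℕ → ℕ → E) → Prop)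
    (hP : ∀ k z z', (∀ i, z' i ∈ cylinder (z i) (k - i)) → P k z → P k z')
    {z₀ : ℕ → ℕ → E} (h₀ : P 0 z₀)
    (hstep : ∀ k z, P k z → ∃ z', (∀ i, z' i ∈ cylinder (z i) (k - i)) ∧ P (k + 1) z') :
    ∃ z, ∀ k, P k z := by
  choose! next hnext hPnext using hstep
  let seq : ℕ → ℕ → ℕ → E := fun k => Nat.rec z₀ next k
  have hPseq : ∀ k, P k (seq k) := fun k => by
    induction k with
    | zero => exact h₀
    | succ k ih => exact hPnext k _ ih
  have hstat : ∀ k k', k ≤ k' → ∀ i, seq k' i ∈ cylinder (seq k i) (k - i) := by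
    intro k k' hkk'
    induction k', hkk' using Nat.le_induction with
    | base => exact fun i => self_mem_cylinder _ _
    | succ k' hkk' ih =>
      intro i
      rw [mem_cylinder_iff_eq, ← mem_cylinder_iff_eq.1 (ih i)]
      exact mem_cylinder_iff_eq.1 (cylinder_anti _ (by omega) (hnext k' _ (hPseq k') i))
  refine ⟨fun i m => seq (i + m + 1) i m, fun k => hP k (seq k) _ (fun i m hm => ?_) (hPseq k)⟩
  exact (mem_cylinder_iff.1 (hstat (i + m + 1) k (by omega) i) m (by omega)).symm

lemma PiNat.exists_cylinder_subset {E : ℕ → Type*} [∀ n, TopologicalSpace (E n)]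
    [∀ n, DiscreteTopology (E n)] {s : Set (∀ n, E n)} (hs : IsOpen s) {z : ∀ n, E n}
    (hz : z ∈ s) : ∃ k, cylinder z k ⊆ s := by
  obtain ⟨_, ⟨y, k, rfl⟩, hzy, hys⟩ :=
    (isTopologicalBasis_cylinders E).exists_subset_of_mem_open hz hs
  exact ⟨k, (mem_cylinder_iff_eq.1 hzy).symm ▸ hys⟩

section Lusin

variable {X Y : Type*} [MeasurableSpace X] [MeasurableSpace Y]

lemma MeasurablyRectSeparable.image_cylinder_of_forall_succ (φ : (ℕ → ℕ) → X × Y)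
    (g : ℕ → (ℕ → ℕ) → X) (F : ℕ → Set Y) (k : ℕ) (z : ℕ → ℕ → ℕ)
    (h : ∀ z' : ℕ → ℕ → ℕ, (∀ i, z' i ∈ cylinder (z i) (k - i)) →
      MeasurablyRectSeparable (φ '' cylinder (z' 0) (k + 1))
        (fun i => g i '' cylinder (z' (i + 1)) (k + 1 - (i + 1))) F) :
    MeasurablyRectSeparable (φ '' cylinder (z 0) k)
      (fun i => g i '' cylinder (z (i + 1)) (k - (i + 1))) F := by
  refine .of_subset_iUnion (B' := fun m₀ => φ '' cylinder (update (z 0) k m₀) (k + 1))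
    ((image_mono (iUnion_cylinder_update (E := fun _ => ℕ) _ _).ge).trans image_iUnion.subset)
    fun m₀ => ?_
  refine .of_forall_ite_lt
    (fun i m => g i '' cylinder (update (z (i + 1)) (k - (i + 1)) m) (k - (i + 1) + 1)) k
    (fun i => (image_mono (iUnion_cylinder_update (E := fun _ => ℕ) _ _).ge).trans
      image_iUnion.subset)
    fun m => ?_
  let z' : ℕ → ℕ → ℕ
    | 0 => update (z 0) k m₀
    | i + 1 => if i < k then update (z (i + 1)) (k - (i + 1)) (m i) else z (i + 1)
  have hz' : ∀ i, z' i ∈ cylinder (z i) (k - i) := by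
    rintro (_ | i)
    · exact update_mem_cylinder _ _ _
    · by_cases hi : i < k
      · simpa [z', hi] using update_mem_cylinder _ _ _
      · simp [z', hi]
  convert h z' hz' using 2 with i
  by_cases hi : i < k
  · simp [z', hi, show k + 1 - (i + 1) = k - (i + 1) + 1 by omega]
  · simp [z', hi, show k + 1 - (i + 1) = 0 by omega, show k - (i + 1) = 0 by omega]

variable [TopologicalSpace X] [TopologicalSpace Y] [T2Space X]
  [OpensMeasurableSpace X] [OpensMeasurableSpace Y]

lemma MeasurablyRectSeparable.exists_image_cylinder {φ : (ℕ → ℕ) → X × Y} (hφ : Continuous φ)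
    {g : ℕ → (ℕ → ℕ) → X} (hg : ∀ n, Continuous (g n)) {F : ℕ → Set Y} (hF : ∀ n, IsClosed (F n))
    (z : ℕ → ℕ → ℕ) {n : ℕ} (hne : (φ (z 0)).1 ≠ g n (z (n + 1))) (hnF : (φ (z 0)).2 ∉ F n) :
    ∃ k, MeasurablyRectSeparable (φ '' cylinder (z 0) k)
      (fun i => g i '' cylinder (z (i + 1)) (k - (i + 1))) F := by
  obtain ⟨U, V, hU, hV, hzU, hzV, hUV⟩ := t2_separation hne
  obtain ⟨k₀, hk₀⟩ := exists_cylinder_subset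
    ((hU.prod (hF n).isOpen_compl).preimage hφ) (show φ (z 0) ∈ U ×ˢ (F n)ᶜ from ⟨hzU, hnF⟩)
  obtain ⟨k₁, hk₁⟩ := exists_cylinder_subset (hV.preimage (hg n)) hzV
  refine ⟨k₀ + k₁ + n + 1, .of_subset_prod n hU.measurableSet hV.measurableSet
    (hF n).measurableSet hUV ?_ ?_⟩
  · exact image_subset_iff.2 ((cylinder_anti _ (by omega)).trans hk₀)
  · exact image_subset_iff.2 ((cylinder_anti _ (by omega)).trans hk₁)

/-- Lusin scheme. Stage `k` is coded by `z : ℕ → ℕ → ℕ`: cylinders of length `k` around `z 0`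
for `φ` and of length `k - (i + 1)` around `z (i + 1)` for `g i`. If the ranges were not
separated, a sequence of non-separated stages would converge to a point violating `H`. -/
theorem measurablyRectSeparable_range {φ : (ℕ → ℕ) → X × Y} (hφ : Continuous φ)
    {g : ℕ → (ℕ → ℕ) → X} (hg : ∀ n, Continuous (g n)) {F : ℕ → Set Y} (hF : ∀ n, IsClosed (F n))
    (H : ∀ p ∈ range φ, ∃ n, p.1 ∉ range (g n) ∧ p.2 ∉ F n) :
    MeasurablyRectSeparable (range φ) (fun n => range (g n)) F := by
  by_contra hsep
  let P : ℕ → (ℕ → ℕ → ℕ) → Prop := fun k z => ¬ MeasurablyRectSeparable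
    (φ '' cylinder (z 0) k) (fun i => g i '' cylinder (z (i + 1)) (k - (i + 1))) F
  have hP : ∀ k (z z' : ℕ → ℕ → ℕ), (∀ i, z' i ∈ cylinder (z i) (k - i)) → P k z → P k z' := by
    intro k z z' hz'
    have hcyl := fun i => mem_cylinder_iff_eq.1 (hz' i)
    have hcyl₀ : cylinder (z' 0) k = cylinder (z 0) k := hcyl 0
    simp only [P, hcyl, hcyl₀, imp_self]
  obtain ⟨z, hz⟩ := PiNat.exists_forall_of_diag_refine P hP (z₀ := fun _ _ => 0)
    (by simpa [P] using hsep) fun k z hk => by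
      by_contra! h
      exact hk (.image_cylinder_of_forall_succ φ g F k z fun z' hz' => not_not.1 (h z' hz'))
  obtain ⟨n, hn, hnF⟩ := H _ (mem_range_self (z 0))
  obtain ⟨k, hk⟩ := MeasurablyRectSeparable.exists_image_cylinder hφ hg hF z
    (fun h => hn ⟨_, h.symm⟩) hnF
  exact hz k hk

end Lusin

lemma exists_seq_isOpen_closure_subset (Y : Type*) [TopologicalSpace Y] [SecondCountableTopology Y]
    [RegularSpace Y] :
    ∃ V : ℕ → Set Y, (∀ n, IsOpen (V n)) ∧
      ∀ y s, IsOpen s → y ∈ s → ∃ n, y ∈ V n ∧ closure (V n) ⊆ s := by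
  obtain ⟨b, hbc, -, hb⟩ := TopologicalSpace.exists_countable_basis Y
  obtain ⟨V, hV⟩ := (hbc.insert ∅).exists_eq_range (insert_nonempty _ _)
  have hVb : ∀ n, V n = ∅ ∨ V n ∈ b := fun n => by
    rw [← mem_insert_iff, hV]
    exact mem_range_self n
  refine ⟨V, fun n => (hVb n).elim (· ▸ isOpen_empty) hb.isOpen, fun y s hs hy => ?_⟩
  obtain ⟨t, ht, htc, hts⟩ := exists_mem_nhds_isClosed_subset (hs.mem_nhds hy)
  obtain ⟨v, hvb, hyv, hvt⟩ := hb.mem_nhds_iff.1 ht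
  obtain ⟨n, rfl⟩ : v ∈ range V := hV ▸ mem_insert_of_mem _ hvb
  exact ⟨n, hyv, (closure_minimal hvt htc).trans hts⟩

section Projection

variable {X Y : Type*} [TopologicalSpace X] [MeasurableSpace X] [TopologicalSpace Y]
  [MeasurableSpace Y]

theorem measurablyRectSeparable_range_of_analyticSet [T2Space X] [OpensMeasurableSpace X]
    [OpensMeasurableSpace Y] {φ : (ℕ → ℕ) → X × Y} (hφ : Continuous φ) {A : ℕ → Set X}
    (hA : ∀ n, AnalyticSet (A n)) {F : ℕ → Set Y} (hF : ∀ n, IsClosed (F n))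
    (H : ∀ p ∈ range φ, ∃ n, (A n).Nonempty ∧ p.1 ∉ A n ∧ p.2 ∉ F n) :
    MeasurablyRectSeparable (range φ) A F := by
  classical
  obtain ⟨n₀, hn₀, -⟩ := H _ (mem_range_self 0)
  let e : ℕ → ℕ := fun n => if (A n).Nonempty then n else n₀
  have he : ∀ n, (A (e n)).Nonempty := fun n => by
    by_cases hn : (A n).Nonempty <;> simp [e, hn, hn₀]
  choose g hg hgA using fun n => (AnalyticSet_def (A (e n)) ▸ hA (e n)).resolve_left (he n).ne_empty
  have hsep := measurablyRectSeparable_range hφ hg (fun n => hF (e n)) fun p hp => by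
    obtain ⟨n, hnA, hpA, hpF⟩ := H p hp
    exact ⟨n, by simpa [hgA, e, hnA] using hpA, by simpa [e, hnA] using hpF⟩
  simp only [hgA] at hsep
  exact .of_comp e hsep

theorem AnalyticSet.measurablyRectSeparable [T2Space X] [OpensMeasurableSpace X]
    [OpensMeasurableSpace Y] {B : Set (X × Y)} (hB : AnalyticSet B) {A : ℕ → Set X}
    (hA : ∀ n, AnalyticSet (A n)) {F : ℕ → Set Y} (hF : ∀ n, IsClosed (F n))
    (H : ∀ p ∈ B, ∃ n, p.1 ∉ A n ∧ p.2 ∉ F n) : MeasurablyRectSeparable B A F := by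
  rw [AnalyticSet_def] at hB
  rcases hB with rfl | ⟨φ, hφ, rfl⟩
  · exact .empty A F
  -- Indices with `A n = ∅` are handled through the closed set `E`, the others through `range φ'`.
  set E := ⋂ (n) (_ : A n = ∅), F n
  have hE : IsClosed E := isClosed_iInter fun n => isClosed_iInter fun _ => hF n
  refine .of_subset_union (B₁ := φ '' (φ ⁻¹' (Prod.snd ⁻¹' E))) ?_ ?_
    (.snd_preimage_compl fun n => (hF n).measurableSet)
  · rintro _ ⟨w, rfl⟩
    by_cases hw : (φ w).2 ∈ E
    exacts [Or.inl ⟨w, hw, rfl⟩, Or.inr hw]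
  have hB₁ : AnalyticSet (φ '' (φ ⁻¹' (Prod.snd ⁻¹' E))) :=
    (hE.preimage (continuous_snd.comp hφ)).analyticSet.image_of_continuous hφ
  rw [AnalyticSet_def] at hB₁
  obtain h | ⟨φ', hφ', h⟩ := hB₁
  · exact h ▸ .empty A F
  refine h ▸ measurablyRectSeparable_range_of_analyticSet hφ' hA hF fun p hp => ?_
  obtain ⟨w, hw, rfl⟩ := h ▸ hp
  obtain ⟨n, hnA, hnF⟩ := H _ (mem_range_self w)
  exact ⟨n, nonempty_iff_ne_empty.2 fun h => hnF (mem_iInter₂.1 hw n h), hnA, hnF⟩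

variable [PolishSpace X] [BorelSpace X] [PolishSpace Y] [BorelSpace Y]

/-- The complement of the projection is the union, over finite covers of `Y` by basic open sets
`V n`, of the Borel sets `⋂ (S n)ᶜ` given by separating `Dᶜ` from the analytic sets
`Prod.fst '' (D ∩ univ ×ˢ closure (V n))`. -/
theorem MeasurableSet.image_fst_of_isClosed_section [CompactSpace Y] {D : Set (X × Y)}
    (hD : MeasurableSet D) (hsec : ∀ x, IsClosed {y | (x, y) ∈ D}) :
    MeasurableSet (Prod.fst '' D) := by
  obtain ⟨V, hVo, hV⟩ := exists_seq_isOpen_closure_subset Y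
  obtain ⟨D', S, -, hS, hDc, hAS, hsep⟩ := AnalyticSet.measurablyRectSeparable
    hD.compl.analyticSet
    (fun n => (hD.inter (MeasurableSet.univ.prod isClosed_closure.measurableSet)).analyticSet
      |>.image_of_continuous continuous_fst)
    (fun n => (hVo n).isClosed_compl) fun p hp => by
      obtain ⟨n, hpV, hVD⟩ := hV p.2 _ (hsec p.1).isOpen_compl hp
      refine ⟨n, ?_, not_not.2 hpV⟩
      rintro ⟨⟨x, y⟩, ⟨hxy, -, hyV⟩, hx : x = p.1⟩
      exact hVD hyV (hx ▸ hxy)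
  have hcompl : (Prod.fst '' D)ᶜ =
      ⋃ (s : Finset ℕ) (_ : univ ⊆ ⋃ n ∈ s, V n), ⋂ n ∈ s, (S n)ᶜ := by
    ext x
    simp only [mem_compl_iff, mem_iUnion, mem_iInter, exists_prop]
    constructor
    · intro hx
      have hcov : univ ⊆ ⋃ n ∈ {n | x ∉ S n}, V n := fun y _ => by
        obtain ⟨n, hxS, hyV⟩ := hsep (x, y) (hDc fun hxy => hx ⟨_, hxy, rfl⟩)
        exact mem_biUnion hxS (not_not.1 hyV)
      obtain ⟨t, hts, ht, htV⟩ :=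
        isCompact_univ.elim_finite_subcover_image (fun n _ => hVo n) hcov
      exact ⟨ht.toFinset, by simpa using htV, fun n hn => hts (by simpa using hn)⟩
    · rintro ⟨s, hsV, hxS⟩ ⟨⟨x, y⟩, hxy, rfl⟩
      obtain ⟨n, hns, hyV⟩ := mem_iUnion₂.1 (hsV (mem_univ y))
      exact hxS n hns (hAS n ⟨(x, y), ⟨hxy, mem_univ x, subset_closure hyV⟩, rfl⟩)
  rw [← compl_compl (Prod.fst '' D), hcompl]
  exact (MeasurableSet.iUnion fun s => .iUnion fun _ =>
    .biInter s.countable_toSet fun n _ => (hS n).compl).compl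

theorem MeasurableSet.image_fst_of_isCompact_section {D : Set (X × Y)} (hD : MeasurableSet D)
    (hsec : ∀ x, IsCompact {y | (x, y) ∈ D}) : MeasurableSet (Prod.fst '' D) := by
  let := TopologicalSpace.upgradeIsCompletelyMetrizable Y
  obtain ⟨e, he⟩ := Metric.PiNatEmbed.exists_embedding_to_hilbert_cube (X := Y)
  have hsec' : ∀ x, {h | (x, h) ∈ Prod.map id e '' D} = e '' {y | (x, y) ∈ D} := fun x => by
    ext; simp
  have := (MeasurableEmbedding.id.prodMap (he.continuous.measurableEmbedding he.injective)
    ).measurableSet_image' hD |>.image_fst_of_isClosed_section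
    fun x => hsec' x ▸ ((hsec x).image he.continuous).isClosed
  rwa [image_image] at this

end Projection

theorem exists_isMinOn_of_isCompact_sep_le {Y β : Type*} [TopologicalSpace Y] [T2Space Y]
    [LinearOrder β] {s : Set Y} (hs : s.Nonempty) {ψ : Y → β}
    (hψ : ∀ r, IsCompact {y ∈ s | ψ y ≤ r}) : ∃ y ∈ s, IsMinOn ψ s y := by
  have : Nonempty s := hs.to_subtype
  have hdir : Directed (· ⊇ ·) fun y : s => {y' ∈ s | ψ y' ≤ ψ y} := fun y₁ y₂ => by
    rcases le_total (ψ y₁) (ψ y₂) with h | h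
    · exact ⟨y₁, subset_rfl, fun y hy => ⟨hy.1, hy.2.trans h⟩⟩
    · exact ⟨y₂, fun y hy => ⟨hy.1, hy.2.trans h⟩, subset_rfl⟩
  obtain ⟨y, hy⟩ := IsCompact.nonempty_iInter_of_directed_nonempty_isCompact_isClosed _ hdir
    (fun y => ⟨y, y.2, le_rfl⟩) (fun y => hψ _) (fun y => (hψ _).isClosed)
  have hy := mem_iInter.1 hy
  obtain ⟨y₀⟩ := this
  exact ⟨y, (hy y₀).1, fun y' hy' => (hy ⟨y', hy'⟩).2⟩

section SectionArgmin

variable {X Y : Type*}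

noncomputable def sectionMin (T : Set (X × Y)) (φ : X × Y → ℝ) (x : X) : ℝ :=
  ⨅ y : {y // (x, y) ∈ T}, φ (x, y)

def sectionArgmin (T : Set (X × Y)) (φ : X × Y → ℝ) : Set (X × Y) :=
  {p ∈ T | ∀ y, (p.1, y) ∈ T → φ p ≤ φ (p.1, y)}

variable {T : Set (X × Y)} {φ : X × Y → ℝ}

lemma sectionArgmin_subset : sectionArgmin T φ ⊆ T := fun _ hp => hp.1

lemma sectionMin_eq_of_mem_sectionArgmin {p : X × Y} (hp : p ∈ sectionArgmin T φ) :
    sectionMin T φ p.1 = φ p := by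
  have : Nonempty {y // (p.1, y) ∈ T} := ⟨⟨p.2, hp.1⟩⟩
  refine IsGLB.ciInf_eq (IsLeast.isGLB ⟨⟨⟨p.2, hp.1⟩, rfl⟩, ?_⟩)
  rintro _ ⟨y, rfl⟩
  exact hp.2 y y.2

variable [TopologicalSpace Y] [T2Space Y]
  (hc : ∀ x r, IsCompact {y | (x, y) ∈ T ∧ φ (x, y) ≤ r}) (hne : ∀ x, ∃ y, (x, y) ∈ T)
include hc hne

lemma exists_mem_sectionArgmin (x : X) : ∃ y, (x, y) ∈ sectionArgmin T φ := by
  obtain ⟨y₀, hy₀⟩ := hne x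
  obtain ⟨y, hy, hmin⟩ := exists_isMinOn_of_isCompact_sep_le ⟨y₀, hy₀⟩ (hc x)
  exact ⟨y, hy, fun y' hy' => hmin hy'⟩

lemma sectionMin_le {x : X} {y : Y} (hy : (x, y) ∈ T) : sectionMin T φ x ≤ φ (x, y) := by
  obtain ⟨y₀, hy₀⟩ := exists_mem_sectionArgmin hc hne x
  exact (sectionMin_eq_of_mem_sectionArgmin hy₀).trans_le (hy₀.2 y hy)

lemma mem_sectionArgmin_iff {p : X × Y} :
    p ∈ sectionArgmin T φ ↔ p ∈ T ∧ φ p ≤ sectionMin T φ p.1 :=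
  ⟨fun hp => ⟨hp.1, (sectionMin_eq_of_mem_sectionArgmin hp).ge⟩,
    fun hp => ⟨hp.1, fun _ hy => hp.2.trans (sectionMin_le hc hne hy)⟩⟩

lemma isCompact_section_sectionArgmin (x : X) : IsCompact {y | (x, y) ∈ sectionArgmin T φ} := by
  simpa only [mem_sectionArgmin_iff hc hne] using hc x (sectionMin T φ x)

variable [TopologicalSpace X] [MeasurableSpace X] [PolishSpace X] [BorelSpace X]
  [MeasurableSpace Y] [PolishSpace Y] [BorelSpace Y]
  (hm : ∀ r, MeasurableSet {p ∈ T | φ p ≤ r})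
include hm

lemma measurable_sectionMin : Measurable (sectionMin T φ) := by
  refine measurable_of_Iic fun r => ?_
  have : sectionMin T φ ⁻¹' Iic r = Prod.fst '' {p ∈ T | φ p ≤ r} := by
    ext x
    constructor
    · intro hx
      obtain ⟨y, hy⟩ := exists_mem_sectionArgmin hc hne x
      exact ⟨(x, y), ⟨hy.1, (sectionMin_eq_of_mem_sectionArgmin hy).ge.trans hx⟩, rfl⟩
    · rintro ⟨⟨x, y⟩, ⟨hT, hφ⟩, rfl⟩
      exact (sectionMin_le hc hne hT).trans hφ
  exact this ▸ (hm r).image_fst_of_isCompact_section (hc · r)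

lemma measurableSet_sectionArgmin : MeasurableSet (sectionArgmin T φ) := by
  have hT : MeasurableSet T := by
    convert MeasurableSet.iUnion fun n : ℕ => hm n
    ext p
    simpa using fun _ => exists_nat_ge (φ p)
  have hφ : Measurable fun p : T => φ p := measurable_of_Iic fun r =>
    (measurable_subtype_coe (hm r)).congr (by ext; simp)
  convert hT.subtype_image (measurableSet_le hφ
    ((measurable_sectionMin hc hne hm).comp (measurable_fst.comp measurable_subtype_coe)))
  ext p
  simp [mem_sectionArgmin_iff hc hne, and_comm]

end SectionArgmin

section Selection

variable {X Y : Type*} [TopologicalSpace X] [MeasurableSpace X] [PolishSpace X] [BorelSpace X]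
  [TopologicalSpace Y] [MeasurableSpace Y] [PolishSpace Y] [BorelSpace Y]

/-- Minimise, one after the other, the coordinates of an embedding of `Y` into the Hilbert cube;
the coordinates of a point in all the successive argmin sets are the measurable minimal values. -/
theorem exists_measurable_selector_of_isCompact_section {T : Set (X × Y)} (hT : MeasurableSet T)
    (hc : ∀ x, IsCompact {y | (x, y) ∈ T}) (hne : ∀ x, ∃ y, (x, y) ∈ T) :
    ∃ f : X → Y, Measurable f ∧ ∀ x, (x, f x) ∈ T := by
  let := TopologicalSpace.upgradeIsCompletelyMetrizable Y
  obtain ⟨e, he⟩ := Metric.PiNatEmbed.exists_embedding_to_hilbert_cube (X := Y)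
  let ψ : ℕ → X × Y → ℝ := fun k p => e p.2 k
  have hψ : ∀ k, Continuous fun y => (e y k : ℝ) := fun k =>
    continuous_subtype_val.comp ((continuous_apply k).comp he.continuous)
  have hcψ : ∀ S : Set (X × Y), (∀ x, IsCompact {y | (x, y) ∈ S}) →
      ∀ k x r, IsCompact {y | (x, y) ∈ S ∧ ψ k (x, y) ≤ r} := fun S hS k x r =>
    (hS x).inter_right (isClosed_le (hψ k) continuous_const)
  have hmψ : ∀ S : Set (X × Y), MeasurableSet S → ∀ k r, MeasurableSet {p ∈ S | ψ k p ≤ r} :=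
    fun S hS k r => hS.inter (measurableSet_le ((hψ k).measurable.comp measurable_snd)
      measurable_const)
  let Ts : ℕ → Set (X × Y) := fun k => Nat.rec T (fun k S => sectionArgmin S (ψ k)) k
  have hTs : ∀ k, MeasurableSet (Ts k) ∧ (∀ x, IsCompact {y | (x, y) ∈ Ts k}) ∧
      ∀ x, ∃ y, (x, y) ∈ Ts k := by
    intro k
    induction k with
    | zero => exact ⟨hT, hc, hne⟩
    | succ k ih =>
      obtain ⟨hm, hc', hne'⟩ := ih
      exact ⟨measurableSet_sectionArgmin (hcψ _ hc' k) hne' (hmψ _ hm k),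
        isCompact_section_sectionArgmin (hcψ _ hc' k) hne',
        exists_mem_sectionArgmin (hcψ _ hc' k) hne'⟩
  choose f hf using fun x => IsCompact.nonempty_iInter_of_sequence_nonempty_isCompact_isClosed
    (fun k => {y | (x, y) ∈ Ts k}) (fun k _ hy => sectionArgmin_subset hy) (fun k => (hTs k).2.2 x)
    ((hTs 0).2.1 x) fun k => ((hTs k).2.1 x).isClosed
  have hfT : ∀ k x, (x, f x) ∈ Ts k := fun k x => mem_iInter.1 (hf x) k
  refine ⟨f, ?_, hfT 0⟩
  have he' : MeasurableEmbedding fun y k => (e y k : ℝ) := (continuous_pi hψ).measurableEmbedding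
    fun a b h => he.injective (funext fun k => Subtype.ext (congrFun h k))
  refine he'.measurable_comp_iff.1 (measurable_pi_lambda _ fun k => ?_)
  have hfk : (fun x => (e (f x) k : ℝ)) = sectionMin (Ts k) (ψ k) := funext fun x =>
    (sectionMin_eq_of_mem_sectionArgmin (hfT (k + 1) x)).symm
  obtain ⟨hm, hc', hne'⟩ := hTs k
  exact hfk ▸ measurable_sectionMin (hcψ _ hc' k) hne' (hmψ _ hm k)

end Selection

theorem MeasurableSet.sep_le_of_le_liminf {Z : Type*} [TopologicalSpace Z] [FrechetUrysohnSpace Z]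
    [MeasurableSpace Z] [OpensMeasurableSpace Z] {K : Set Z} (hK : MeasurableSet K) {u : Z → ℝ}
    (hu_nonneg : ∀ p ∈ K, 0 ≤ u p)
    (hu_lsc : ∀ p ∈ K, ∀ seq : ℕ → Z, (∀ n, seq n ∈ K) →
      Tendsto seq atTop (𝓝 p) → u p ≤ atTop.liminf fun n => u (seq n)) (r : ℝ) :
    MeasurableSet {p ∈ K | u p ≤ r} := by
  have : {p ∈ K | u p ≤ r} = K ∩ closure {p ∈ K | u p ≤ r} := by
    refine (subset_inter (sep_subset _ _) subset_closure).antisymm ?_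
    rintro p ⟨hpK, hp⟩
    obtain ⟨seq, hseq, hlim⟩ := mem_closure_iff_seq_limit.1 hp
    refine ⟨hpK, (hu_lsc p hpK seq (fun n => (hseq n).1) hlim).trans ?_⟩
    -- nonnegativity makes the `liminf` a genuine one rather than a junk value
    refine liminf_le_of_le (isBoundedUnder_of_eventually_ge
      (Eventually.of_forall fun n => hu_nonneg _ (hseq n).1)) fun b hb => ?_
    obtain ⟨n, hn⟩ := hb.exists
    exact hn.trans (hseq n).2
  exact this ▸ hK.inter isClosed_closure.measurableSet

/-- Measurable selection of minimizers: let `X, A` be Polish spaces, `K` a Borel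
subset of `X × A` with nonempty sections `A(x) = {a | (x,a) ∈ K}`, and let `u` be
nonnegative and (sequentially) lower semicontinuous on `K`, and inf-compact on `K`
(every set `{a ∈ A(x) | u(x,a) ≤ r}` is compact). Then there is a Borel measurable
selector `f : X → A`, `f(x) ∈ A(x)`, attaining `u*(x) = inf_{a ∈ A(x)} u(x,a)` for
every `x`, and `u*` is Borel measurable. -/
theorem exists_measurable_selector_of_infCompact
    {X A : Type*}
    [TopologicalSpace X] [PolishSpace X] [MeasurableSpace X] [BorelSpace X]
    [TopologicalSpace A] [PolishSpace A] [MeasurableSpace A] [BorelSpace A]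
    (K : Set (X × A)) (hK : MeasurableSet K)
    (hKne : ∀ x : X, ∃ a : A, (x, a) ∈ K)
    (u : X × A → ℝ)
    (hu_nonneg : ∀ p ∈ K, 0 ≤ u p)
    (hu_lsc : ∀ p ∈ K, ∀ seq : ℕ → X × A, (∀ n, seq n ∈ K) →
      Tendsto seq atTop (𝓝 p) → u p ≤ atTop.liminf fun n => u (seq n))
    (hu_infcompact : ∀ (x : X) (r : ℝ), IsCompact {a : A | (x, a) ∈ K ∧ u (x, a) ≤ r}) :
    ∃ f : X → A, Measurable f ∧ (∀ x, (x, f x) ∈ K) ∧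
      (∀ x, u (x, f x) = ⨅ a : {a : A // (x, a) ∈ K}, u (x, (a : A))) ∧
      Measurable fun x => ⨅ a : {a : A // (x, a) ∈ K}, u (x, (a : A)) := by
  have hsub := hK.sep_le_of_le_liminf hu_nonneg hu_lsc
  obtain ⟨f, hf, hfK⟩ := exists_measurable_selector_of_isCompact_section
    (measurableSet_sectionArgmin hu_infcompact hKne hsub)
    (isCompact_section_sectionArgmin hu_infcompact hKne)
    (exists_mem_sectionArgmin hu_infcompact hKne)
  exact ⟨f, hf, fun x => (hfK x).1, fun x => (sectionMin_eq_of_mem_sectionArgmin (hfK x)).symm,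
    measurable_sectionMin hu_infcompact hKne hsub⟩
end
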